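/- arXiv:2210.03981 — 3 statements merged into one kernel-verified Lean document; each statement's English description precedes it below -/
import Mathlib

section
/- Let $\mathcal{M}(t)$ be the non-homogeneous generalized counting process with cumulative rate functions $\Lambda_j(t)=\int_0^t\lambda_j(u)\,du$, $1\le j\le k$, whose state probabilities satisfy $\frac{d}{dt}q_n(t) = -\sum_{j=1}^k\lambda_j(t)q_n(t) + \sum_{j=1}^{n\wedge k}\lambda_j(t)q_{n-j}(t)$ with $q_0(0)=1$, $q_n(0)=0$ for $n\ge1$. Then the functions $q_n(t)=\sum_{\Omega(k,n)}\prod_{j=1}^k\frac{(\Lambda_j(t))^{x_j}}{x_j!}e^{-\sum_{j=1}^k\Lambda_j(t)}$ solve this system. -/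
/-!
Each `qₙ(t)` is a finite sum over `Ω(k, n)` of Poisson weights `∏ⱼ Λⱼ^{xⱼ}/xⱼ!` times
`e^{-∑ Λⱼ}`. Differentiating the exponential gives `-∑ λⱼ qₙ`. Differentiating the weight in `Λᵢ`
lowers `xᵢ` by one, and `x ↦ x - eᵢ` maps `{x ∈ Ω(k, n) | xᵢ ≠ 0}` bijectively onto `Ω(k, n - i)`
(with inverse `y ↦ y + eᵢ`), which yields `λᵢ q_{n-i}`. At `t = 0` all `Λⱼ` vanish, so only
`x = 0 ∈ Ω(k, 0)` contributes.
-/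

open scoped BigOperators

/-- The candidate pmf of the non-homogeneous GCP with cumulative rates `L j`:
`∑_{Ω(k,n)} ∏ (Lⱼ)^{xⱼ}/xⱼ! · exp(-∑ Lⱼ)`. -/
noncomputable def ngcpPmf (k : ℕ) (L : Fin k → ℝ) (n : ℕ) : ℝ :=
  ∑' x : Fin k → ℕ,
    if ∑ j, (j.1 + 1) * x j = n then
      (∏ j, L j ^ x j / (Nat.factorial (x j) : ℝ)) * Real.exp (-∑ j, L j)
    else 0

namespace NGCP

open Finset

variable {k : ℕ}

/-- The index `j : Fin k` stands for the jump size `j + 1`. -/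
def size (x : Fin k → ℕ) : ℕ := ∑ j, (j.1 + 1) * x j

lemma mul_le_size (x : Fin k → ℕ) (i : Fin k) : (i.1 + 1) * x i ≤ size x :=
  single_le_sum (f := fun j => (j.1 + 1) * x j) (fun _ _ => Nat.zero_le _) (mem_univ i)

lemma size_add_single (y : Fin k → ℕ) (i : Fin k) :
    size (y + Pi.single i 1) = size y + (i.1 + 1) := by
  simp [size, mul_add, sum_add_distrib, Pi.single_apply]

def Omega (k n : ℕ) : Finset (Fin k → ℕ) :=
  {x ∈ Fintype.piFinset fun _ => range (n + 1) | size x = n}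

lemma mem_Omega {n : ℕ} {x : Fin k → ℕ} : x ∈ Omega k n ↔ size x = n := by
  refine ⟨fun h => (mem_filter.mp h).2, fun h => mem_filter.mpr ⟨?_, h⟩⟩
  refine Fintype.mem_piFinset.mpr fun i => mem_range.mpr (Nat.lt_succ_of_le ?_)
  exact (Nat.le_mul_of_pos_left _ i.1.succ_pos).trans (h ▸ mul_le_size x i)

lemma sum_Omega_sub_single {M : Type*} [AddCommMonoid M] (f : (Fin k → ℕ) → M)
    (n : ℕ) (i : Fin k) :
    ∑ x ∈ Omega k n with x i ≠ 0, f (x - Pi.single i 1)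
      = if i.1 + 1 ≤ n then ∑ y ∈ Omega k (n - (i.1 + 1)), f y else 0 := by
  split_ifs with hn
  · refine sum_nbij' (· - Pi.single i 1) (· + Pi.single i 1) ?_ ?_ ?_ ?_ fun _ _ => rfl
    · intro x hx
      obtain ⟨hx, hxi⟩ := mem_filter.mp hx
      have hx' : x - Pi.single i 1 + Pi.single i 1 = x := by
        ext j; by_cases hj : j = i <;> simp [hj]; omega
      have hsize := size_add_single (x - Pi.single i 1) i
      rw [hx', mem_Omega.mp hx] at hsize
      rw [mem_Omega]
      omega
    · intro y hy
      rw [mem_Omega] at hy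
      rw [mem_filter, mem_Omega, size_add_single]
      exact ⟨by omega, by simp⟩
    · intro x hx
      obtain ⟨-, hxi⟩ := mem_filter.mp hx
      ext j; by_cases hj : j = i <;> simp [hj]; omega
    · intro y _
      simp
  · refine sum_eq_zero fun x hx => absurd ?_ hn
    obtain ⟨hx, hxi⟩ := mem_filter.mp hx
    exact (Nat.le_mul_of_pos_right _ (Nat.pos_of_ne_zero hxi)).trans
      (mem_Omega.mp hx ▸ mul_le_size x i)

noncomputable def weight (L : Fin k → ℝ) (x : Fin k → ℕ) : ℝ :=
  ∏ j, L j ^ x j / (x j).factorial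

lemma ngcpPmf_eq_sum (L : Fin k → ℝ) (n : ℕ) :
    ngcpPmf k L n = ∑ x ∈ Omega k n, weight L x * Real.exp (-∑ j, L j) := by
  rw [ngcpPmf, tsum_eq_sum (s := Omega k n)]
  · exact sum_congr rfl fun x hx => if_pos (mem_Omega.mp hx)
  · exact fun x hx => if_neg (hx ∘ mem_Omega.mpr)

lemma weight_zero (x : Fin k → ℕ) : weight 0 x = if x = 0 then 1 else 0 := by
  split_ifs with hx
  · simp [weight, hx]
  · obtain ⟨i, hi⟩ := Function.ne_iff.mp hx
    exact prod_eq_zero (mem_univ i) (by simp [zero_pow hi])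

lemma ngcpPmf_zero (n : ℕ) : ngcpPmf k 0 n = if n = 0 then 1 else 0 := by
  have h0 : (0 : Fin k → ℕ) ∈ Omega k n ↔ n = 0 := by simp [mem_Omega, size, eq_comm]
  simp only [ngcpPmf_eq_sum, weight_zero, Pi.zero_apply, sum_const_zero, neg_zero,
    Real.exp_zero, mul_one, sum_ite_eq', h0]

lemma weight_sub_single (L : Fin k → ℝ) (x : Fin k → ℕ) (i : Fin k) :
    weight L (x - Pi.single i 1)
      = L i ^ (x i - 1) / (x i - 1).factorial *
          ∏ j ∈ univ.erase i, L j ^ x j / (x j).factorial := by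
  rw [weight, ← mul_prod_erase _ _ (mem_univ i)]
  congr 1
  · simp
  · exact prod_congr rfl fun j hj => by simp [ne_of_mem_erase hj]

lemma _root_.HasDerivAt.pow_succ_div_factorial {f : ℝ → ℝ} {f' t : ℝ} (hf : HasDerivAt f f' t)
    (m : ℕ) :
    HasDerivAt (fun t => f t ^ (m + 1) / (m + 1).factorial) (f t ^ m / m.factorial * f') t := by
  refine ((hf.pow (m + 1)).div_const ((m + 1).factorial : ℝ)).congr_deriv ?_
  rw [Nat.factorial_succ]
  push_cast
  field_simp

variable {Λ : Fin k → ℝ → ℝ} {l : Fin k → ℝ} {t : ℝ}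

lemma hasDerivAt_weight (hΛ : ∀ j, HasDerivAt (Λ j) (l j) t) (x : Fin k → ℕ) :
    HasDerivAt (fun t => weight (fun j => Λ j t) x)
      (∑ i with x i ≠ 0, l i * weight (fun j => Λ j t) (x - Pi.single i 1)) t := by
  have hfactor : ∀ i, HasDerivAt (fun t => Λ i t ^ x i / (x i).factorial)
      (if x i = 0 then 0 else Λ i t ^ (x i - 1) / (x i - 1).factorial * l i) t := fun i => by
    cases hxi : x i with
    | zero => simpa using hasDerivAt_const t (1 : ℝ)
    | succ m => simpa using (hΛ i).pow_succ_div_factorial m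
  refine (HasDerivAt.fun_finsetProd fun i (_ : i ∈ univ) => hfactor i).congr_deriv ?_
  rw [sum_filter]
  refine sum_congr rfl fun i _ => ?_
  by_cases hxi : x i = 0
  · simp [hxi]
  · rw [if_neg hxi, if_pos hxi, weight_sub_single, smul_eq_mul]
    ring

lemma hasDerivAt_ngcpPmf (hΛ : ∀ j, HasDerivAt (Λ j) (l j) t) (n : ℕ) :
    HasDerivAt (fun t => ngcpPmf k (fun j => Λ j t) n)
      (-(∑ j, l j) * ngcpPmf k (fun j => Λ j t) n +
        ∑ i : Fin k, if i.1 + 1 ≤ n then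
          l i * ngcpPmf k (fun j => Λ j t) (n - (i.1 + 1)) else 0) t := by
  set L : Fin k → ℝ := fun j => Λ j t
  set E := Real.exp (-∑ j, L j)
  have hexp : HasDerivAt (fun t => Real.exp (-∑ j, Λ j t)) (E * -∑ j, l j) t :=
    (HasDerivAt.fun_sum fun j _ => hΛ j).neg.exp
  simp only [ngcpPmf_eq_sum]
  refine (HasDerivAt.fun_sum fun x (_ : x ∈ Omega k n) =>
    (hasDerivAt_weight hΛ x).mul hexp).congr_deriv ?_
  rw [sum_add_distrib, add_comm]
  congr 1
  · rw [mul_sum]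
    exact sum_congr rfl fun _ _ => by ring
  · calc ∑ x ∈ Omega k n, (∑ i with x i ≠ 0, l i * weight L (x - Pi.single i 1)) * E
        = ∑ i, ∑ x ∈ Omega k n with x i ≠ 0, l i * weight L (x - Pi.single i 1) * E := by
          simp only [sum_mul, sum_filter, ite_mul, zero_mul]
          exact sum_comm
      _ = _ := sum_congr rfl fun i _ => by
          rw [sum_Omega_sub_single (fun y => l i * weight L y * E)]
          simp only [mul_sum, mul_assoc, E]

end NGCP

theorem ngcp_solves_general (k : ℕ) (lam : Fin k → ℝ → ℝ) (hcont : ∀ j, Continuous (lam j)) :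
    (∀ (n : ℕ) (t : ℝ),
      HasDerivAt (fun t : ℝ => ngcpPmf k (fun j => ∫ s in (0:ℝ)..t, lam j s) n)
        (-(∑ j, lam j t) * ngcpPmf k (fun j => ∫ s in (0:ℝ)..t, lam j s) n +
          ∑ j : Fin k, if j.1 + 1 ≤ n then
            lam j t * ngcpPmf k (fun j' => ∫ s in (0:ℝ)..t, lam j' s) (n - (j.1 + 1))
          else 0) t)
    ∧ ngcpPmf k (fun j => ∫ s in (0:ℝ)..(0:ℝ), lam j s) 0 = 1
    ∧ ∀ n : ℕ, 1 ≤ n → ngcpPmf k (fun j => ∫ s in (0:ℝ)..(0:ℝ), lam j s) n = 0 := by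
  have hΛ₀ : (fun j => ∫ s in (0:ℝ)..(0:ℝ), lam j s) = 0 :=
    funext fun _ => intervalIntegral.integral_same
  refine ⟨fun n t => NGCP.hasDerivAt_ngcpPmf (fun j => ?_) n, ?_, fun n hn => ?_⟩
  · exact ((hcont j).integral_hasStrictDerivAt 0 t).hasDerivAt
  · rw [hΛ₀, NGCP.ngcpPmf_zero, if_pos rfl]
  · rw [hΛ₀, NGCP.ngcpPmf_zero, if_neg (by omega)]

/-- The functions `qₙ(t) = ∑_{Ω(k,n)} ∏ (Λⱼ(t))^{xⱼ}/xⱼ! e^{-∑ Λⱼ(t)}`, with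
`Λⱼ(t) = ∫₀ᵗ λⱼ(u)du`, solve the NGCP system
`q'ₙ(t) = -∑ⱼ λⱼ(t) qₙ(t) + ∑_{j=1}^{n∧k} λⱼ(t) q_{n-j}(t)` with `q₀(0)=1`, `qₙ(0)=0` for `n≥1`. -/
theorem ngcp_solves (k : ℕ) (lam : Fin k → ℝ → ℝ) (hcont : ∀ j, Continuous (lam j))
    (hpos : ∀ j t, 0 ≤ lam j t) :
    (∀ (n : ℕ) (t : ℝ),
      HasDerivAt (fun t : ℝ => ngcpPmf k (fun j => ∫ s in (0:ℝ)..t, lam j s) n)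
        (-(∑ j, lam j t) * ngcpPmf k (fun j => ∫ s in (0:ℝ)..t, lam j s) n +
          ∑ j : Fin k, if j.1 + 1 ≤ n then
            lam j t * ngcpPmf k (fun j' => ∫ s in (0:ℝ)..t, lam j' s) (n - (j.1 + 1))
          else 0) t)
    ∧ ngcpPmf k (fun j => ∫ s in (0:ℝ)..(0:ℝ), lam j s) 0 = 1
    ∧ ∀ n : ℕ, 1 ≤ n → ngcpPmf k (fun j => ∫ s in (0:ℝ)..(0:ℝ), lam j s) n = 0 :=
  ngcp_solves_general k lam hcont
end

section
/- Let $K(u,y)$ satisfy the integro-differential equation $\frac{\partial K(u,y)}{\partial u}=\frac{f(\Lambda)}{c}\big(K(u,y)+W(u)-W(u+y)-\int_0^u K(u-x,y)\,dW(x)\big)$ for $u\ge0$, where $W$ is a probability distribution function on $(0,\infty)$, $c>0$, $f(\Lambda)>0$, and suppose $K(\infty,y)=\lim_{u\to\infty}K(u,y)=0$ with $K(\cdot,y)$ integrable on $(0,\infty)$. Then the ruin quantity at zero initial capital is $K(0,y)=\frac{f(\Lambda)}{c}\int_0^y(1-W(v))\,dv$. -/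
/-!
Integrate the equation over `u ∈ (0, ∞)`. Since `K(∞, y) = 0`, the left side integrates to
`-K(0, y)`. By Fubini the convolution term integrates to `W((0,∞)) ∫ K = ∫ K`, which cancels the
`K` term. The increments telescope, `∫₀ᵀ (W(u+y) - W(u)) du = ∫_T^{T+y} W - ∫₀^y W`, and the
first integral tends to `y`, leaving `∫₀^y (1 - W)`.
-/

open MeasureTheory Set Filter Topology ContinuousLinearMap Convolution

namespace Monotone

variable {W : ℝ → ℝ} {L y : ℝ}

theorem tendsto_intervalIntegral_add (hW : Monotone W) (hWL : Tendsto W atTop (𝓝 L))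
    (hy : 0 ≤ y) : Tendsto (fun T => ∫ u in T..T + y, W u) atTop (𝓝 (y * L)) := by
  have hlow : ∀ T, y * W T ≤ ∫ u in T..T + y, W u := fun T => by
    simpa using intervalIntegral.integral_mono_on (le_add_of_nonneg_right hy)
      (intervalIntegrable_const (μ := volume)) hW.intervalIntegrable fun u hu => hW hu.1
  have hup : ∀ T, ∫ u in T..T + y, W u ≤ y * W (T + y) := fun T => by
    simpa using intervalIntegral.integral_mono_on (le_add_of_nonneg_right hy)
      hW.intervalIntegrable (intervalIntegrable_const (μ := volume)) fun u hu => hW hu.2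
  exact tendsto_of_tendsto_of_tendsto_of_le_of_le (hWL.const_mul y)
    ((hWL.comp (tendsto_atTop_add_const_right _ y tendsto_id)).const_mul y) hlow hup

theorem intervalIntegral_comp_add_sub (hW : Monotone W) (a T y : ℝ) :
    ∫ u in a..T, (W (u + y) - W u) = (∫ u in T..T + y, W u) - ∫ u in a..a + y, W u := by
  have hWy : Monotone fun u => W (u + y) := hW.comp (monotone_id.add_const y)
  rw [intervalIntegral.integral_sub hWy.intervalIntegrable hW.intervalIntegrable,
    intervalIntegral.integral_comp_add_right W y,
    intervalIntegral.integral_interval_sub_interval_comm hW.intervalIntegrable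
      hW.intervalIntegrable hW.intervalIntegrable,
    intervalIntegral.integral_symm a, intervalIntegral.integral_symm T]
  ring

theorem tendsto_intervalIntegral_comp_add_sub (hW : Monotone W) (hWL : Tendsto W atTop (𝓝 L))
    (hy : 0 ≤ y) (a : ℝ) :
    Tendsto (fun T => ∫ u in a..T, (W (u + y) - W u)) atTop
      (𝓝 (∫ v in a..a + y, (L - W v))) := by
  rw [intervalIntegral.integral_sub intervalIntegrable_const hW.intervalIntegrable,
    intervalIntegral.integral_const, add_sub_cancel_left, smul_eq_mul]
  simp only [hW.intervalIntegral_comp_add_sub a _ y]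
  exact (hW.tendsto_intervalIntegral_add hWL hy).sub_const _

theorem integrableOn_Ioi_comp_add_sub (hW : Monotone W) (hWL : Tendsto W atTop (𝓝 L))
    (hy : 0 ≤ y) (a : ℝ) : IntegrableOn (fun u => W (u + y) - W u) (Ioi a) := by
  have hWy : Monotone fun u => W (u + y) := hW.comp (monotone_id.add_const y)
  refine integrableOn_Ioi_of_intervalIntegral_norm_tendsto (∫ v in a..a + y, (L - W v)) a
    (fun T => (hWy.intervalIntegrable.sub hW.intervalIntegrable).1) tendsto_id ?_
  have hnorm : ∀ u, ‖W (u + y) - W u‖ = W (u + y) - W u := fun u =>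
    Real.norm_of_nonneg (sub_nonneg.2 (hW (le_add_of_nonneg_right hy)))
  simpa only [hnorm, id] using hW.tendsto_intervalIntegral_comp_add_sub hWL hy a

theorem integral_Ioi_comp_add_sub (hW : Monotone W) (hWL : Tendsto W atTop (𝓝 L))
    (hy : 0 ≤ y) (a : ℝ) :
    ∫ u in Ioi a, (W (u + y) - W u) = ∫ v in a..a + y, (L - W v) :=
  tendsto_nhds_unique
    (intervalIntegral_tendsto_integral_Ioi a (hW.integrableOn_Ioi_comp_add_sub hWL hy a)
      tendsto_id)
    (hW.tendsto_intervalIntegral_comp_add_sub hWL hy a)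

end Monotone

section ConvolutionOnHalfLine

variable {E : Type*} [NormedAddCommGroup E] {ν : Measure ℝ} {k : ℝ → E}

/-- The closed indicator on `k` keeps the endpoint `x = u`, where `ν` may have an atom. -/
theorem convolution_indicator_Ioi_one_indicator_Ici [NormedSpace ℝ E] (u : ℝ) :
    ((Ioi (0 : ℝ)).indicator 1 ⋆[lsmul ℝ ℝ, ν] (Ici 0).indicator k) u
      = ∫ x in Ioc 0 u, k (u - x) ∂ν := by
  rw [convolution_def, ← integral_indicator measurableSet_Ioc]
  congr 1 with x
  by_cases hx : 0 < x <;> by_cases hxu : x ≤ u <;>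
    simp [indicator, hx, hxu, sub_nonneg]

theorem integrable_indicator_Ioi_one (hν : ν (Ioi 0) ≠ ⊤) :
    Integrable ((Ioi (0 : ℝ)).indicator (1 : ℝ → ℝ)) ν :=
  (integrable_indicator_iff measurableSet_Ioi).2 (integrableOn_const hν)

theorem integrable_indicator_Ici_of_integrableOn_Ioi (hk : IntegrableOn k (Ioi 0)) :
    Integrable ((Ici (0 : ℝ)).indicator k) :=
  (integrable_indicator_iff measurableSet_Ici).2
    ((integrableOn_Ici_iff_integrableOn_Ioi (f := k)).2 hk)

theorem integrableOn_Ioi_integral_Ioc_sub [NormedSpace ℝ E] [SFinite ν] (hν : ν (Ioi 0) ≠ ⊤)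
    (hk : IntegrableOn k (Ioi 0)) :
    IntegrableOn (fun u => ∫ x in Ioc 0 u, k (u - x) ∂ν) (Ioi 0) := by
  simpa only [← convolution_def, convolution_indicator_Ioi_one_indicator_Ici] using
    ((integrable_indicator_Ioi_one hν).convolution_integrand (lsmul ℝ ℝ)
      (integrable_indicator_Ici_of_integrableOn_Ioi hk)).integral_prod_left.integrableOn

theorem integral_Ioi_integral_Ioc_sub [NormedSpace ℝ E] [CompleteSpace E] [SFinite ν]
    (hν : ν (Ioi 0) ≠ ⊤) (hk : IntegrableOn k (Ioi 0)) :
    ∫ u in Ioi 0, ∫ x in Ioc 0 u, k (u - x) ∂ν = ν.real (Ioi 0) • ∫ u in Ioi 0, k u := by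
  have hconv := integral_convolution (lsmul ℝ ℝ) (integrable_indicator_Ioi_one hν)
    (integrable_indicator_Ici_of_integrableOn_Ioi hk)
  simp only [convolution_indicator_Ioi_one_indicator_Ici, integral_indicator_one measurableSet_Ioi,
    integral_indicator measurableSet_Ici, integral_Ici_eq_integral_Ioi, lsmul_apply] at hconv
  rw [← hconv, setIntegral_eq_integral_of_forall_compl_eq_zero]
  intro u hu
  rw [Ioc_eq_empty (by simpa using hu), Measure.restrict_empty, integral_zero_measure]

end ConvolutionOnHalfLine

theorem ruin_zero_capital_general (c F y : ℝ) (hy : 0 ≤ y)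
    (W : StieltjesFunction ℝ) (hW0 : ∀ x : ℝ, x ≤ 0 → W x = 0)
    (hWtop : Filter.Tendsto W Filter.atTop (nhds 1))
    (K : ℝ → ℝ → ℝ)
    (hode : ∀ u : ℝ, 0 ≤ u → HasDerivAt (fun v => K v y)
      (F / c * (K u y + W u - W (u + y) -
        ∫ x in Set.Ioc (0 : ℝ) u, K (u - x) y ∂W.measure)) u)
    (hlim : Filter.Tendsto (fun u => K u y) Filter.atTop (nhds 0))
    (hint : IntegrableOn (fun u => K u y) (Set.Ioi (0 : ℝ))) :
    K 0 y = F / c * ∫ v in Set.Ioc (0 : ℝ) y, (1 - W v) := by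
  have hν : W.measure (Ioi 0) = 1 := by
    rw [W.measure_Ioi hWtop, hW0 0 le_rfl, sub_zero, ENNReal.ofReal_one]
  have hν_ne_top : W.measure (Ioi 0) ≠ ⊤ := by simp [hν]
  set conv := fun u => ∫ x in Ioc 0 u, K (u - x) y ∂W.measure
  have hconv : IntegrableOn conv (Ioi 0) := integrableOn_Ioi_integral_Ioc_sub hν_ne_top hint
  have hinc := W.mono.integrableOn_Ioi_comp_add_sub hWtop hy 0
  have hrearrange : ∀ u, F / c * (K u y + W u - W (u + y) - conv u)
      = F / c * ((K u y - conv u) - (W (u + y) - W u)) := fun u => by ring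
  have hdiff : IntegrableOn (fun u => K u y - conv u) (Ioi 0) := hint.sub hconv
  have hderiv_int :
      IntegrableOn (fun u => F / c * ((K u y - conv u) - (W (u + y) - W u))) (Ioi 0) :=
    (hdiff.sub hinc).const_mul (F / c)
  have hFTC := integral_Ioi_of_hasDerivAt_of_tendsto' (fun u hu => hode u hu)
    (hderiv_int.congr_fun (fun u _ => (hrearrange u).symm) measurableSet_Ioi) hlim
  have hval : ∫ u in Ioi 0, F / c * ((K u y - conv u) - (W (u + y) - W u))
      = -(F / c * ∫ v in Ioc 0 y, (1 - W v)) := by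
    rw [integral_const_mul, integral_sub hdiff hinc, integral_sub hint hconv,
      integral_Ioi_integral_Ioc_sub hν_ne_top hint, measureReal_def, hν, ENNReal.toReal_one,
      one_smul, W.mono.integral_Ioi_comp_add_sub hWtop hy 0, zero_add,
      intervalIntegral.integral_of_le hy]
    ring
  rw [integral_congr_ae (ae_of_all _ hrearrange), hval] at hFTC
  linarith

/-- If `K(·,y)` satisfies the integro-differential equation
`∂_u K(u,y) = (f(Λ)/c)(K(u,y) + W(u) - W(u+y) - ∫₀ᵘ K(u-x,y) dW(x))` for `u ≥ 0`, where `W` is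
a probability distribution function on `(0,∞)`, `K(∞,y) = 0` and `K(·,y)` is integrable on
`(0,∞)`, then `K(0,y) = (f(Λ)/c) ∫₀ʸ (1 - W(v)) dv`.  Here `F = f(Λ) > 0` and `c > 0`. -/
theorem ruin_zero_capital (c F y : ℝ) (hc : 0 < c) (hF : 0 < F) (hy : 0 ≤ y)
    (W : StieltjesFunction ℝ) (hW0 : ∀ x : ℝ, x ≤ 0 → W x = 0)
    (hW1 : ∀ x : ℝ, W x ≤ 1) (hWtop : Filter.Tendsto W Filter.atTop (nhds 1))
    (K : ℝ → ℝ → ℝ)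
    (hode : ∀ u : ℝ, 0 ≤ u → HasDerivAt (fun v => K v y)
      (F / c * (K u y + W u - W (u + y) -
        ∫ x in Set.Ioc (0 : ℝ) u, K (u - x) y ∂W.measure)) u)
    (hlim : Filter.Tendsto (fun u => K u y) Filter.atTop (nhds 0))
    (hint : IntegrableOn (fun u => K u y) (Set.Ioi (0 : ℝ))) :
    K 0 y = F / c * ∫ v in Set.Ioc (0 : ℝ) y, (1 - W v) :=
  ruin_zero_capital_general c F y hy W hW0 hWtop K hode hlim hint
end

section
/- For $0<u<1$, $0<\alpha,\beta<1$, $\lambda_j>0$, $\Lambda=\sum_{j=1}^k\lambda_j$, let $c=1-\frac{1}{\Lambda}\sum_{j=1}^k\lambda_j u^j\in(0,1)$. Then $E_{\alpha,1}\big(-t^\alpha\Lambda^\beta c^\beta\big) = \sum_{r=0}^\infty (1-c^\beta)^r \sum_{m=r}^\infty(-1)^{m-r}\binom{m}{r}\frac{(t^\alpha\Lambda^\beta)^m}{\Gamma(m\alpha+1)}$; equivalently, the pgf of the GSTFCP equals $\Pr\{\min_{0\le r\le N_\alpha(t,\Lambda^\beta)}X_r^{1/\beta}\ge c\}$ where $X_i$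 are iid uniform on $[0,1]$ and $N_\alpha(t,\Lambda^\beta)$ is an independent time fractional Poisson process with pmf $\Pr\{N_\alpha(t,\mu)=r\}=\sum_{m\ge r}(-1)^{m-r}\binom{m}{r}\frac{(\mu t^\alpha)^m}{\Gamma(m\alpha+1)}$. -/
/-!
Writing `-μ c^β = μ (s - 1)` with `s = 1 - c^β` and `μ = t^α Λ^β`, the binomial expansion
`(s - 1)^m = ∑_{r+i=m} C(m,r) s^r (-1)^i` turns the Mittag-Leffler series into a double series
over `(r, i) ∈ ℕ × ℕ`, which is then summed row by row. This is legitimate because the double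
series converges absolutely: summing its absolute values along antidiagonals gives the
Mittag-Leffler series at `(|s| + 1) |μ|`, and that series converges for every argument since
log-convexity of `Γ` makes `Γ(y + α) / Γ(y)` grow like `y^α`.
-/

open scoped BigOperators

/-- Mittag-Leffler function `E_{α,1}(x) = ∑ xᵐ/Γ(mα+1)`. -/
noncomputable def mlFn (α x : ℝ) : ℝ := ∑' m : ℕ, x ^ m / Real.Gamma ((m : ℝ) * α + 1)

open Finset Filter

namespace Real

-- Wendel's inequality: log-convexity of `Γ` at `x + 1 = α (x + α) + (1 - α) (x + α + 1)`.
theorem Gamma_add_one_le_rpow_mul_Gamma_add {x α : ℝ} (hx : 0 < x) (hα₀ : 0 < α) (hα₁ : α < 1) :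
    Gamma (x + 1) ≤ (x + α) ^ (1 - α) * Gamma (x + α) := by
  have hxα : 0 < x + α := by linarith
  have h := Gamma_mul_add_mul_le_rpow_Gamma_mul_rpow_Gamma hxα (by linarith : 0 < x + α + 1)
    hα₀ (sub_pos.2 hα₁) (add_sub_cancel α 1)
  rwa [show α * (x + α) + (1 - α) * (x + α + 1) = x + 1 by ring, Gamma_add_one hxα.ne',
    mul_rpow hxα.le (Gamma_pos_of_pos hxα).le, mul_left_comm, ← rpow_add (Gamma_pos_of_pos hxα),
    add_sub_cancel, rpow_one] at h

theorem rpow_mul_Gamma_le_two_mul_Gamma_add {y α : ℝ} (hy : 1 ≤ y) (hα₀ : 0 < α) (hα₁ : α < 1) :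
    y ^ α * Gamma y ≤ 2 * Gamma (y + α) := by
  have hy₀ : 0 < y := by linarith
  have hΓ := Gamma_pos_of_pos (by linarith : 0 < y + α)
  have hpos : 0 < y ^ (1 - α) := rpow_pos_of_pos hy₀ _
  refine le_of_mul_le_mul_left ?_ hpos
  calc y ^ (1 - α) * (y ^ α * Gamma y) = Gamma (y + 1) := by
        rw [← mul_assoc, ← rpow_add hy₀, sub_add_cancel, rpow_one, Gamma_add_one hy₀.ne']
    _ ≤ (y + α) ^ (1 - α) * Gamma (y + α) := Gamma_add_one_le_rpow_mul_Gamma_add hy₀ hα₀ hα₁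
    _ ≤ (2 * y) ^ (1 - α) * Gamma (y + α) := by
        gcongr
        linarith
    _ ≤ y ^ (1 - α) * (2 * Gamma (y + α)) := by
        rw [mul_rpow zero_le_two hy₀.le, mul_left_comm, ← mul_assoc]
        gcongr
        exact rpow_le_self_of_one_le one_le_two (by linarith)

theorem summable_pow_div_Gamma_mul_add_one {α : ℝ} (hα₀ : 0 < α) (hα₁ : α < 1) (x : ℝ) :
    Summable fun m : ℕ => x ^ m / Gamma (m * α + 1) := by
  have hlarge : Tendsto (fun m : ℕ => ((m : ℝ) * α + 1) ^ α) atTop atTop :=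
    (tendsto_rpow_atTop hα₀).comp <| tendsto_atTop_add_const_right _ 1 <|
      tendsto_natCast_atTop_atTop.atTop_mul_const hα₀
  refine summable_of_ratio_norm_eventually_le (r := 1 / 2) (by norm_num) ?_
  filter_upwards [hlarge.eventually_ge_atTop (4 * |x|)] with m hm
  set y : ℝ := m * α + 1
  have hy : 1 ≤ y := by simp only [y]; nlinarith [m.cast_nonneg (α := ℝ)]
  have hΓ := Gamma_pos_of_pos (by linarith : 0 < y)
  have hΓα := Gamma_pos_of_pos (by linarith : 0 < y + α)
  have hratio : |x| * Gamma y ≤ 1 / 2 * Gamma (y + α) := by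
    nlinarith [rpow_mul_Gamma_le_two_mul_Gamma_add hy hα₀ hα₁, mul_le_mul_of_nonneg_right hm hΓ.le]
  rw [show ((m + 1 : ℕ) : ℝ) * α + 1 = y + α by push_cast; ring, norm_div, norm_div, norm_pow,
    norm_pow, norm_of_nonneg hΓ.le, norm_of_nonneg hΓα.le, Real.norm_eq_abs, pow_succ,
    div_le_iff₀ hΓα]
  calc |x| ^ m * |x| = |x| ^ m / Gamma y * (|x| * Gamma y) := by field_simp
    _ ≤ |x| ^ m / Gamma y * (1 / 2 * Gamma (y + α)) := by gcongr
    _ = 1 / 2 * (|x| ^ m / Gamma y) * Gamma (y + α) := by ring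

end Real

section Antidiagonal
variable {A : Type*} [AddCommMonoid A] [HasAntidiagonal A]

theorem Summable.tsum_eq_tsum_sum_antidiagonal {M : Type*} [AddCommGroup M] [UniformSpace M]
    [IsUniformAddGroup M] [CompleteSpace M] [T3Space M] {f : A × A → M} (hf : Summable f) :
    ∑' p, f p = ∑' n, ∑ p ∈ antidiagonal n, f p := by
  rw [← HasAntidiagonal.sigmaAntidiagonalEquivProd.tsum_eq]
  refine (HasAntidiagonal.sigmaAntidiagonalEquivProd.summable_iff.2 hf).tsum_sigma.trans ?_
  simp [sum_attach]

theorem summable_of_nonneg_of_summable_sum_antidiagonal {f : A × A → ℝ} (hf : 0 ≤ f)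
    (h : Summable fun n => ∑ p ∈ antidiagonal n, f p) : Summable f := by
  rw [← HasAntidiagonal.sigmaAntidiagonalEquivProd.summable_iff]
  refine (summable_sigma_of_nonneg fun _ => hf _).2 ⟨fun _ => .of_finite, ?_⟩
  simpa [sum_attach] using h

end Antidiagonal

theorem sum_antidiagonal_pow_mul_pow_mul_choose_mul {R : Type*} [CommSemiring R] (a b : R)
    (f : ℕ → R) (n : ℕ) :
    ∑ p ∈ antidiagonal n, a ^ p.1 * b ^ p.2 * ((p.1 + p.2).choose p.1 : R) * f (p.1 + p.2) =
      (a + b) ^ n * f n := by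
  rw [(Commute.all a b).add_pow', sum_mul]
  refine sum_congr rfl fun p hp => ?_
  rw [mem_antidiagonal.1 hp, nsmul_eq_mul]
  ring

theorem tsum_add_pow_mul_eq_tsum_tsum {a b : ℝ} {f : ℕ → ℝ}
    (hf : Summable fun n => (|a| + |b|) ^ n * |f n|) :
    ∑' n, (a + b) ^ n * f n =
      ∑' r, ∑' i, a ^ r * b ^ i * ((r + i).choose r : ℝ) * f (r + i) := by
  set g : ℕ × ℕ → ℝ := fun p => a ^ p.1 * b ^ p.2 * ((p.1 + p.2).choose p.1 : ℝ) * f (p.1 + p.2)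
  have hg : Summable g := by
    refine .of_norm <| summable_of_nonneg_of_summable_sum_antidiagonal (fun _ => norm_nonneg _) ?_
    have hnorm (p : ℕ × ℕ) :
        ‖g p‖ = |a| ^ p.1 * |b| ^ p.2 * ((p.1 + p.2).choose p.1 : ℝ) * |f (p.1 + p.2)| := by
      simp [g]
    simpa only [hnorm, sum_antidiagonal_pow_mul_pow_mul_choose_mul |a| |b| (|f ·|)] using hf
  calc ∑' n, (a + b) ^ n * f n = ∑' n, ∑ p ∈ antidiagonal n, g p := by
        simp only [g, sum_antidiagonal_pow_mul_pow_mul_choose_mul]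
    _ = ∑' p, g p := hg.tsum_eq_tsum_sum_antidiagonal.symm
    _ = _ := hg.tsum_prod' hg.prod_factor

theorem mlFn_mul_sub_one {α : ℝ} (hα₀ : 0 < α) (hα₁ : α < 1) (s μ : ℝ) :
    mlFn α (μ * (s - 1)) =
      ∑' r : ℕ, s ^ r * ∑' i : ℕ, (-1 : ℝ) ^ i * ((r + i).choose r : ℝ) * μ ^ (r + i) /
        Real.Gamma (((r + i : ℕ) : ℝ) * α + 1) := by
  have hΓ (m : ℕ) : 0 < Real.Gamma (m * α + 1) := Real.Gamma_pos_of_pos (by positivity)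
  have hsum : Summable fun m : ℕ => (|s| + |-1|) ^ m * |μ ^ m / Real.Gamma (m * α + 1)| := by
    simpa only [abs_div, abs_pow, abs_of_pos (hΓ _), mul_pow, mul_div_assoc] using
      Real.summable_pow_div_Gamma_mul_add_one hα₀ hα₁ ((|s| + |-1|) * |μ|)
  calc mlFn α (μ * (s - 1))
      = ∑' m : ℕ, (s + -1) ^ m * (μ ^ m / Real.Gamma (m * α + 1)) := by
        unfold mlFn
        exact tsum_congr fun m => by rw [mul_pow, ← sub_eq_add_neg]; ring
    _ = _ := tsum_add_pow_mul_eq_tsum_tsum hsum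
    _ = _ := by
        refine tsum_congr fun r => ?_
        rw [← tsum_mul_left]
        exact tsum_congr fun i => by push_cast; ring

theorem gstfcp_pgf_rearrange_general (k : ℕ) (lam : Fin k → ℝ)
    (α β u t : ℝ) (hα : α ∈ Set.Ioo (0 : ℝ) 1) :
    mlFn α (-(t ^ α * (∑ j, lam j) ^ β *
        (1 - (∑ j, lam j)⁻¹ * ∑ j, lam j * u ^ (j.1 + 1)) ^ β)) =
      ∑' r : ℕ, (1 - (1 - (∑ j, lam j)⁻¹ * ∑ j, lam j * u ^ (j.1 + 1)) ^ β) ^ r *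
        ∑' i : ℕ, (-1 : ℝ) ^ i * ((r + i).choose r : ℝ) *
          (t ^ α * (∑ j, lam j) ^ β) ^ (r + i) / Real.Gamma (((r + i : ℕ) : ℝ) * α + 1) := by
  convert mlFn_mul_sub_one hα.1 hα.2 (1 - (1 - (∑ j, lam j)⁻¹ * ∑ j, lam j * u ^ (j.1 + 1)) ^ β)
    (t ^ α * (∑ j, lam j) ^ β) using 2
  ring

/-- With `c = 1 - Λ⁻¹ ∑ λⱼ uʲ ∈ (0,1)`, the pgf of the GSTFCP rearranges as
`E_{α,1}(-t^α Λ^β c^β) = ∑_{r≥0} (1-c^β)^r ∑_{m≥r} (-1)^{m-r} C(m,r) (t^α Λ^β)^m/Γ(mα+1)`,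
i.e. it equals `Pr{min_{0≤r≤N_α(t,Λ^β)} X_r^{1/β} ≥ c}` for iid uniform `X_i` and an independent
time fractional Poisson process `N_α` with pmf `∑_{m≥r} (-1)^{m-r} C(m,r)(μt^α)^m/Γ(mα+1)`. -/
theorem gstfcp_pgf_rearrange (k : ℕ) (lam : Fin k → ℝ) (hlam : ∀ j, 0 < lam j)
    (α β u t : ℝ) (hα : α ∈ Set.Ioo (0 : ℝ) 1) (hβ : β ∈ Set.Ioo (0 : ℝ) 1)
    (hu : u ∈ Set.Ioo (0 : ℝ) 1) (ht : 0 ≤ t)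
    (hc : (1 - (∑ j, lam j)⁻¹ * ∑ j, lam j * u ^ (j.1 + 1)) ∈ Set.Ioo (0 : ℝ) 1) :
    mlFn α (-(t ^ α * (∑ j, lam j) ^ β *
        (1 - (∑ j, lam j)⁻¹ * ∑ j, lam j * u ^ (j.1 + 1)) ^ β)) =
      ∑' r : ℕ, (1 - (1 - (∑ j, lam j)⁻¹ * ∑ j, lam j * u ^ (j.1 + 1)) ^ β) ^ r *
        ∑' i : ℕ, (-1 : ℝ) ^ i * ((r + i).choose r : ℝ) *
          (t ^ α * (∑ j, lam j) ^ β) ^ (r + i) / Real.Gamma (((r + i : ℕ) : ℝ) * α + 1) :=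
  gstfcp_pgf_rearrange_general k lam α β u t hα
end
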